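/- arXiv:2203.02405 — 3 statements merged into one kernel-verified Lean document; each statement's English description precedes it below -/
import Mathlib

section
/- Let γ, β be real numbers with γ ≥ |β|/√3. Then for all complex numbers z and w, Re((γ + iβ)(|z|²z − |w|²w) · conj(z − w)) ≥ 0; i.e., the map z ↦ (γ + iβ)|z|²z is monotone on ℂ viewed as ℝ². -/
/-!
Write `u = (|z|²z - |w|²w) · conj (z - w)` and `ζ = z · conj w`. Using `Re ζ ² + Im ζ ² = |z|²|w|²`,

  `4 Re u = 3 (|z|² - |w|²)² + |z - w|⁴ + 4 (Im ζ)²`,  `Im u = -(|z|² - |w|²) Im ζ`,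

so AM-GM on the first and last terms gives `√3 |Im u| ≤ Re u`: `u` lies in the sector of half-angle
`π/6` around the positive axis. The hypothesis puts `γ + iβ` in the sector of half-angle `π/3`,
and the product of two points of sectors whose half-angles add up to `π/2` has nonnegative real part.
-/

open ComplexConjugate

namespace Complex

/-- The half-angles `arctan t⁻¹` and `arctan t` add up to `π/2`. -/
theorem re_mul_nonneg_of_abs_im_le {u v : ℂ} {t : ℝ} (ht : 0 < t) (hu : t * |u.im| ≤ u.re)
    (hv : |v.im| ≤ t * v.re) : 0 ≤ (v * u).re := by
  have hv_re : 0 ≤ v.re := nonneg_of_mul_nonneg_right ((abs_nonneg _).trans hv) ht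
  calc 0 ≤ v.re * u.re - |v.im| * |u.im| := by nlinarith [abs_nonneg u.im]
    _ ≤ v.re * u.re - v.im * u.im := by
        rw [← abs_mul]; exact sub_le_sub_left (le_abs_self _) _
    _ = (v * u).re := (mul_re v u).symm

section CubicDifference

variable (z w : ℂ)

theorem four_mul_re_cubic_sub_mul_conj :
    4 * (((‖z‖ : ℂ) ^ 2 * z - (‖w‖ : ℂ) ^ 2 * w) * conj (z - w)).re =
      3 * (‖z‖ ^ 2 - ‖w‖ ^ 2) ^ 2 + (‖z - w‖ ^ 2) ^ 2 + 4 * (z * conj w).im ^ 2 := by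
  simp only [← ofReal_pow, Complex.sq_norm, normSq_apply, mul_re, mul_im, sub_re, sub_im,
    ofReal_re, ofReal_im, conj_re, conj_im]
  ring

theorem im_cubic_sub_mul_conj :
    (((‖z‖ : ℂ) ^ 2 * z - (‖w‖ : ℂ) ^ 2 * w) * conj (z - w)).im =
      -((‖z‖ ^ 2 - ‖w‖ ^ 2) * (z * conj w).im) := by
  simp only [← ofReal_pow, Complex.sq_norm, normSq_apply, mul_re, mul_im, sub_re, sub_im,
    ofReal_re, ofReal_im, conj_re, conj_im]
  ring

theorem sqrt_three_mul_abs_im_cubic_sub_mul_conj_le :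
    √3 * |(((‖z‖ : ℂ) ^ 2 * z - (‖w‖ : ℂ) ^ 2 * w) * conj (z - w)).im| ≤
      (((‖z‖ : ℂ) ^ 2 * z - (‖w‖ : ℂ) ^ 2 * w) * conj (z - w)).re := by
  set d := ‖z‖ ^ 2 - ‖w‖ ^ 2
  set s := (z * conj w).im
  have amgm : 2 * (√3 * |d|) * (2 * |s|) ≤ (√3 * |d|) ^ 2 + (2 * |s|) ^ 2 := two_mul_le_add_sq _ _
  have h3 : √3 ^ 2 = 3 := Real.sq_sqrt (by norm_num)
  rw [im_cubic_sub_mul_conj, abs_neg, abs_mul]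
  nlinarith [four_mul_re_cubic_sub_mul_conj z w, sq_abs d, sq_abs s, sq_nonneg (‖z - w‖ ^ 2)]

end CubicDifference

end Complex

theorem cubic_monotone_pointwise (γ β : ℝ) (h : |β| / Real.sqrt 3 ≤ γ) (z w : ℂ) :
    0 ≤ (((γ : ℂ) + (β : ℂ) * Complex.I) *
        (((‖z‖ : ℝ) : ℂ) ^ 2 * z - ((‖w‖ : ℝ) : ℂ) ^ 2 * w) *
        (starRingEnd ℂ) (z - w)).re := by
  have hβ : |((γ : ℂ) + β * Complex.I).im| ≤ √3 * ((γ : ℂ) + β * Complex.I).re := by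
    simpa [mul_comm] using (div_le_iff₀ (by positivity)).mp h
  rw [mul_assoc]
  exact Complex.re_mul_nonneg_of_abs_im_le (by positivity)
    (Complex.sqrt_three_mul_abs_im_cubic_sub_mul_conj_le z w) hβ
end

section
/- Let γ, β be real numbers with γ > |β|/√3 and let a = (a₁, a₂) ∈ ℝ² be nonzero. Then the symmetric matrix B(a) with entries B₁₁ = 3γa₁² − 2βa₁a₂ + γa₂², B₁₂ = B₂₁ = βa₁² + 2γa₁a₂ − βa₂², B₂₂ = γa₁² + 2βa₁a₂ + 3γa₂² is positive definite. -/
/-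
Both ⟨B(a)w, w⟩ and the entry B₁₁ are binary quadratic forms p x² + 2q xy + r y² with p > 0 and
q² < pr, hence positive definite by completing the square: p·(p x² + 2q xy + r y²) =
(p x + q y)² + (pr − q²) y². For B(a) the condition q² < pr is det B(a) = (3γ² − β²)|a|⁴ > 0.
-/

open Matrix

theorem binary_quadratic_pos_of_sq_lt_mul {p q r x y : ℝ} (hp : 0 < p) (hdisc : q ^ 2 < p * r)
    (hxy : (x, y) ≠ (0, 0)) : 0 < p * x ^ 2 + 2 * q * x * y + r * y ^ 2 := by
  have hsq : p * (p * x ^ 2 + 2 * q * x * y + r * y ^ 2) =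
      (p * x + q * y) ^ 2 + (p * r - q ^ 2) * y ^ 2 := by
    ring
  refine pos_of_mul_pos_right (hsq ▸ ?_) hp.le
  rcases eq_or_ne y 0 with rfl | hy
  · have hx : x ≠ 0 := fun hx => hxy (by rw [hx])
    simp only [mul_zero, add_zero]
    positivity
  · exact add_pos_of_nonneg_of_pos (sq_nonneg _) (mul_pos (sub_pos.2 hdisc) (by positivity))

theorem dotProduct_mulVec_fin_two_pos {p q r : ℝ} (hp : 0 < p) (hdisc : q ^ 2 < p * r)
    {w : Fin 2 → ℝ} (hw : w ≠ 0) : 0 < w ⬝ᵥ (!![p, q; q, r] *ᵥ w) := by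
  have hw' : (w 0, w 1) ≠ (0, 0) := fun h0 => hw <| by
    ext i; fin_cases i <;> simp_all
  convert binary_quadratic_pos_of_sq_lt_mul hp hdisc hw' using 1
  simp only [dotProduct, mulVec, Fin.sum_univ_two, of_apply, cons_val', cons_val_zero,
    cons_val_one, empty_val', cons_val_fin_one]
  ring

theorem sq_lt_three_mul_sq_of_abs_div_sqrt_three_lt {β γ : ℝ} (h : |β| / √3 < γ) :
    β ^ 2 < 3 * γ ^ 2 := by
  have hγ : 0 ≤ γ := (div_nonneg (abs_nonneg β) (Real.sqrt_nonneg 3)).trans h.le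
  have h' : |β| < √(3 * γ ^ 2) := by
    rwa [Real.sqrt_mul' 3 (sq_nonneg γ), Real.sqrt_sq hγ, ← div_lt_iff₀' (by positivity)]
  simpa using (Real.lt_sqrt (abs_nonneg β)).1 h'

theorem B_posDef (γ β a₁ a₂ : ℝ) (hγ : |β| / Real.sqrt 3 < γ) (ha : (a₁, a₂) ≠ (0, 0)) :
    ∀ w : Fin 2 → ℝ, w ≠ 0 →
      0 < dotProduct w
        (Matrix.mulVec !![3 * γ * a₁ ^ 2 - 2 * β * a₁ * a₂ + γ * a₂ ^ 2,
                          β * a₁ ^ 2 + 2 * γ * a₁ * a₂ - β * a₂ ^ 2;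
                          β * a₁ ^ 2 + 2 * γ * a₁ * a₂ - β * a₂ ^ 2,
                          γ * a₁ ^ 2 + 2 * β * a₁ * a₂ + 3 * γ * a₂ ^ 2] w) := by
  intro w hw
  have hγ0 : 0 < γ := (div_nonneg (abs_nonneg β) (Real.sqrt_nonneg 3)).trans_lt hγ
  have hdisc : β ^ 2 < 3 * γ ^ 2 := sq_lt_three_mul_sq_of_abs_div_sqrt_three_lt hγ
  have hB₁₁ : 0 < 3 * γ * a₁ ^ 2 - 2 * β * a₁ * a₂ + γ * a₂ ^ 2 := by
    have := binary_quadratic_pos_of_sq_lt_mul (p := 3 * γ) (q := -β) (r := γ) (by positivity) (by linarith) ha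
    linarith
  have hnorm : 0 < a₁ ^ 2 + a₂ ^ 2 := by
    have := binary_quadratic_pos_of_sq_lt_mul (p := 1) (q := 0) (r := 1) one_pos (by norm_num) ha
    linarith
  have hdet : (3 * γ * a₁ ^ 2 - 2 * β * a₁ * a₂ + γ * a₂ ^ 2) *
        (γ * a₁ ^ 2 + 2 * β * a₁ * a₂ + 3 * γ * a₂ ^ 2) -
        (β * a₁ ^ 2 + 2 * γ * a₁ * a₂ - β * a₂ ^ 2) ^ 2 =
      (3 * γ ^ 2 - β ^ 2) * (a₁ ^ 2 + a₂ ^ 2) ^ 2 := by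
    ring
  refine dotProduct_mulVec_fin_two_pos hB₁₁ ?_ hw
  linarith [mul_pos (sub_pos.2 hdisc) (pow_pos hnorm 2)]
end

section
/- Let γ, β ∈ ℝ with √3·γ ≥ |β|, and define H : ℝ² → ℝ² by H(a) = (a₁² + a₂²)·(γa₁ − βa₂, βa₁ + γa₂). Then H is monotone: ⟨H(u) − H(v), u − v⟩ ≥ 0 for all u, v ∈ ℝ². -/
/-!
Write `A = |u|²`, `B = |v|²`, `p = ⟨u, v⟩` and `q = u₂v₁ - u₁v₂`, so that `p² + q² = AB`.
The pairing `⟨H u - H v, u - v⟩` equals `γ X + β (A - B) q` with `X = A² + B² - (A + B) p ≥ 0`.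
Eliminating `q²` turns `3 ((A - B) q)² ≤ X²` into a ternary quartic inequality in `A, B, p`,
which is an explicit sum of squares; hence `|β (A - B) q| ≤ √3 γ |(A - B) q| ≤ γ X`.
-/

lemma three_mul_sq_sub_mul_sub_sq_le_sq (A B p : ℝ) :
    3 * (A - B) ^ 2 * (A * B - p ^ 2) ≤ (A ^ 2 + B ^ 2 - (A + B) * p) ^ 2 := by
  nlinarith [sq_nonneg (2 * (A + B) * p - (A + B) ^ 2 + 2 * (A - B) ^ 2),
    mul_nonneg (sq_nonneg (A - B)) (sq_nonneg (2 * p - A - B))]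

lemma mul_le_sq_add_sq_of_sq_le_mul {A B p : ℝ} (hAB : 0 ≤ A + B) (hp : p ^ 2 ≤ A * B) :
    (A + B) * p ≤ A ^ 2 + B ^ 2 := by
  have h2p : 2 * p ≤ A + B := abs_le_of_sq_le_sq' (by nlinarith [sq_nonneg (A - B)]) hAB |>.2
  nlinarith [mul_le_mul_of_nonneg_left h2p hAB, sq_nonneg (A - B)]

lemma add_mul_nonneg_of_sq_le {γ β X Y : ℝ} (hγ : 0 ≤ γ) (hβ : β ^ 2 ≤ 3 * γ ^ 2)
    (hX : 0 ≤ X) (hXY : 3 * Y ^ 2 ≤ X ^ 2) : 0 ≤ γ * X + β * Y := by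
  have hsq : (β * Y) ^ 2 ≤ (γ * X) ^ 2 := by
    calc (β * Y) ^ 2 = β ^ 2 * Y ^ 2 := by ring
      _ ≤ 3 * γ ^ 2 * Y ^ 2 := by gcongr
      _ = γ ^ 2 * (3 * Y ^ 2) := by ring
      _ ≤ γ ^ 2 * X ^ 2 := by gcongr
      _ = (γ * X) ^ 2 := by ring
  linarith [(abs_le_of_sq_le_sq' hsq (mul_nonneg hγ hX)).1]

lemma gram_pairing_nonneg {γ β A B p q : ℝ} (hγ : 0 ≤ γ) (hβ : β ^ 2 ≤ 3 * γ ^ 2)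
    (hAB : 0 ≤ A + B) (hpq : p ^ 2 + q ^ 2 = A * B) :
    0 ≤ γ * (A ^ 2 + B ^ 2 - (A + B) * p) + β * ((A - B) * q) := by
  have hq : q ^ 2 = A * B - p ^ 2 := by linarith
  refine add_mul_nonneg_of_sq_le hγ hβ ?_ ?_
  · linarith [mul_le_sq_add_sq_of_sq_le_mul hAB (by nlinarith [sq_nonneg q] : p ^ 2 ≤ A * B)]
  · calc 3 * ((A - B) * q) ^ 2 = 3 * (A - B) ^ 2 * (A * B - p ^ 2) := by rw [mul_pow, hq]; ring
      _ ≤ _ := three_mul_sq_sub_mul_sub_sq_le_sq A B p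

lemma nonneg_and_sq_le_of_abs_le_sqrt_three_mul {γ β : ℝ} (h : |β| ≤ Real.sqrt 3 * γ) :
    0 ≤ γ ∧ β ^ 2 ≤ 3 * γ ^ 2 := by
  have hsqrt : 0 < Real.sqrt 3 := by positivity
  refine ⟨nonneg_of_mul_nonneg_right ((abs_nonneg β).trans h) hsqrt, ?_⟩
  calc β ^ 2 = |β| ^ 2 := (sq_abs β).symm
    _ ≤ (Real.sqrt 3 * γ) ^ 2 := pow_le_pow_left₀ (abs_nonneg β) h 2
    _ = 3 * γ ^ 2 := by rw [mul_pow, Real.sq_sqrt (by norm_num)]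

theorem cubic_real_monotone (γ β : ℝ) (h : |β| ≤ Real.sqrt 3 * γ) :
    ∀ u v : ℝ × ℝ,
      0 ≤ ((u.1 ^ 2 + u.2 ^ 2) * (γ * u.1 - β * u.2) -
              (v.1 ^ 2 + v.2 ^ 2) * (γ * v.1 - β * v.2)) * (u.1 - v.1) +
          ((u.1 ^ 2 + u.2 ^ 2) * (β * u.1 + γ * u.2) -
              (v.1 ^ 2 + v.2 ^ 2) * (β * v.1 + γ * v.2)) * (u.2 - v.2) := by
  intro u v
  obtain ⟨hγ, hβ⟩ := nonneg_and_sq_le_of_abs_le_sqrt_three_mul h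
  have key := gram_pairing_nonneg (A := u.1 ^ 2 + u.2 ^ 2) (B := v.1 ^ 2 + v.2 ^ 2)
    (p := u.1 * v.1 + u.2 * v.2) (q := u.2 * v.1 - u.1 * v.2) hγ hβ (by positivity) (by ring)
  linear_combination key
end
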